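/- Let t₁ < 0 and let u ∈ C²(ℝ³ × [t₁, 0)) satisfy u_tt − Δu + u⁵ = 0 pointwise with E₀ := E(u; D(t₁)) < ∞. For every ε > 0 there exists a constant C = C(ε) ≥ 1 such that for every z₀ = (x₀, t₀) with t₁ ≤ t₀ < 0 and |x₀| ≤ |t₀|, and all times τ, σ with t₁ ≤ τ ≤ σ ≤ C·t₀, there holds ∫_{M_τ^σ(z₀)} A do ≥ ½ ∫_{M_τ^σ(z₀)} |u_ρ|² do − ε E₀, where on M(z₀), with y = x − x₀, one sets u_σ = (y/|y|)·∇u, u_ρ = (u_t − u_σ)/√2, and A = Q₀ + (u_t u)/t + u²/(2t²) − (y/|y|)·P₀ with Q₀ = ½|u_t|² + ½|∇u|² + |u|⁶/6 + ((x/t)·∇u) u_t and P₀ = (x/t)( ½|u_t|² − ½|∇u|² − |u|⁶/6 ) + ( u_t + (x/t)·∇u + u/t ) ∇u. -/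

import Mathlib

/-!
Write `ν = y/|y|`, `v = x/t` and `d = 1 + ν·v`. On the mantle `d = (|t₀| - ν·x₀)/(|y| + |t₀|)`, so
once `|y| ≥ 7|t₀|` (i.e. `t ≤ 8t₀`) we have `0 ≤ d ≤ 1/4`, and the component of `v` orthogonal to
`ν` has squared length at most `d/4`: far below the vertex, `x/t` is close to `-ν`. Expanding `A`
in `u_t`, `ν·∇u` and the tangential part of `∇u`, the difference `A - ½|u_ρ|²` is a sum of squares,
`d`-weighted energy terms, and one cross term between the tangential parts of `v` and `∇u`, which
Cauchy–Schwarz and AM–GM absorb. Hence `A ≥ ½|u_ρ|²` pointwise on `M_τ^σ(z₀)` with `C = 8`, and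
integrating gives the claim since `ε E₀ ≥ 0`.
-/

open MeasureTheory Filter Set

noncomputable section

/-- Euclidean 3-space. -/
abbrev E3 := EuclideanSpace ℝ (Fin 3)

/-- First time derivative `u_t` of `u = u(x,t)`. -/
noncomputable def ut (u : E3 × ℝ → ℝ) (x : E3) (t : ℝ) : ℝ := deriv (fun s => u (x, s)) t

/-- Second time derivative `u_tt` of `u = u(x,t)`. -/
noncomputable def utt (u : E3 × ℝ → ℝ) (x : E3) (t : ℝ) : ℝ :=
  deriv (fun s => deriv (fun r => u (x, r)) s) t

/-- Spatial gradient `∇u` of `u = u(x,t)`. -/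
noncomputable def sgrad (u : E3 × ℝ → ℝ) (x : E3) (t : ℝ) : E3 := gradient (fun y => u (y, t)) x

/-- Spatial Laplacian `Δu` of `u = u(x,t)`. -/
noncomputable def slap (u : E3 × ℝ → ℝ) (x : E3) (t : ℝ) : ℝ :=
  ∑ i : Fin 3, fderiv ℝ (fun y => fderiv ℝ (fun z => u (z, t)) y (EuclideanSpace.single i 1)) x
      (EuclideanSpace.single i 1)

/-- Energy density `e(u) = ½(|u_t|² + |∇u|²) + |u|⁶/6`. -/
noncomputable def eDen (u : E3 × ℝ → ℝ) (x : E3) (t : ℝ) : ℝ :=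
  ((ut u x t) ^ 2 + ‖sgrad u x t‖ ^ 2) / 2 + |u (x, t)| ^ 6 / 6

/-- The slab `ℝ³ × [t₁, 0)`. -/
def slab (t₁ : ℝ) : Set (E3 × ℝ) := {p : E3 × ℝ | t₁ ≤ p.2 ∧ p.2 < 0}

/-- The space-like section `D(t) = {x : |x| ≤ -t}` of the backward light cone with vertex
at the space-time origin. -/
def Dsec (t : ℝ) : Set E3 := Metric.closedBall (0 : E3) (-t)

/-- The truncated backward light cone `K_t = {(x,s) : t ≤ s < 0, |x| ≤ -s}` with vertex at
the space-time origin. -/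
def Kcone (t : ℝ) : Set (E3 × ℝ) := {p : E3 × ℝ | t ≤ p.2 ∧ p.2 < 0 ∧ ‖p.1‖ ≤ -p.2}

/-- Surface integral `∫_{M_T^S(z₀)} f do` over the truncated mantle
`M_T^S(z₀) = {(x,t) : |x - x₀| = t₀ - t, T ≤ t ≤ S}` of the backward light cone with vertex
`z₀ = (x₀,t₀)`, with respect to 3-dimensional Hausdorff (surface) measure on the mantle:
computed via the graph parametrization `y ↦ (x₀ + y, t₀ - |y|)`, whose area factor is `√2`. -/
noncomputable def mInt (x₀ : E3) (t₀ T S : ℝ) (f : E3 → ℝ → ℝ) : ℝ :=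
  Real.sqrt 2 * ∫ y in {y : E3 | t₀ - S ≤ ‖y‖ ∧ ‖y‖ ≤ t₀ - T}, f (x₀ + y) (t₀ - ‖y‖)

/-- The quantity `Q₀ = ½|u_t|² + ½|∇u|² + |u|⁶/6 + ((x/t)·∇u) u_t`. -/
noncomputable def Q0 (u : E3 × ℝ → ℝ) (x : E3) (t : ℝ) : ℝ :=
  (ut u x t) ^ 2 / 2 + ‖sgrad u x t‖ ^ 2 / 2 + |u (x, t)| ^ 6 / 6 +
    (inner ℝ (t⁻¹ • x) (sgrad u x t) : ℝ) * ut u x t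

/-- The vector field
`P₀ = (x/t)(½|u_t|² − ½|∇u|² − |u|⁶/6) + (u_t + (x/t)·∇u + u/t) ∇u`. -/
noncomputable def P0 (u : E3 × ℝ → ℝ) (x : E3) (t : ℝ) : E3 :=
  ((ut u x t) ^ 2 / 2 - ‖sgrad u x t‖ ^ 2 / 2 - |u (x, t)| ^ 6 / 6) • (t⁻¹ • x) +
    (ut u x t + (inner ℝ (t⁻¹ • x) (sgrad u x t) : ℝ) + u (x, t) / t) • sgrad u x t

/-- The derivative `u_σ = (y/|y|)·∇u` of `u` in the direction radial from `x₀`,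
`y = x - x₀`. -/
noncomputable def uσ (x₀ : E3) (u : E3 × ℝ → ℝ) (x : E3) (t : ℝ) : ℝ :=
  inner ℝ ((‖x - x₀‖)⁻¹ • (x - x₀)) (sgrad u x t)

/-- The tangential derivative `u_ρ = (u_t − u_σ)/√2` along the mantle `M(z₀)`. -/
noncomputable def uρ (x₀ : E3) (u : E3 × ℝ → ℝ) (x : E3) (t : ℝ) : ℝ :=
  (ut u x t - uσ x₀ u x t) / Real.sqrt 2

/-- The integrand `A = Q₀ + (u_t u)/t + u²/(2t²) − (y/|y|)·P₀`, `y = x - x₀`. -/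
noncomputable def Afun (x₀ : E3) (u : E3 × ℝ → ℝ) (x : E3) (t : ℝ) : ℝ :=
  Q0 u x t + ut u x t * u (x, t) / t + (u (x, t)) ^ 2 / (2 * t ^ 2) -
    (inner ℝ ((‖x - x₀‖)⁻¹ • (x - x₀)) (P0 u x t) : ℝ)

section FluxDensity

variable {E : Type*} [NormedAddCommGroup E] [InnerProductSpace ℝ E]

/-- With `n = y/|y|`, `v = x/t` and `m = u/t`, `F = |u|⁶/6`, this is the integrand `A`. -/
def fluxDensity (n v g : E) (a m F : ℝ) : ℝ :=
  a ^ 2 / 2 + ‖g‖ ^ 2 / 2 + F + inner ℝ v g * a + a * m + m ^ 2 / 2 -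
    inner ℝ n ((a ^ 2 / 2 - ‖g‖ ^ 2 / 2 - F) • v + (a + inner ℝ v g + m) • g)

lemma ContinuousOn.fluxDensity {X : Type*} [TopologicalSpace X] {s : Set X} {n v g : X → E}
    {a m F : X → ℝ} (hn : ContinuousOn n s) (hv : ContinuousOn v s) (hg : ContinuousOn g s)
    (ha : ContinuousOn a s) (hm : ContinuousOn m s) (hF : ContinuousOn F s) :
    ContinuousOn (fun x => fluxDensity (n x) (v x) (g x) (a x) (m x) (F x)) s := by
  unfold _root_.fluxDensity
  fun_prop

lemma flux_scalar_bound {a s k w m F G T : ℝ} (hF : 0 ≤ F) (hG : s ^ 2 ≤ G)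
    (hCS : (w - k * s) ^ 2 ≤ T * (G - s ^ 2)) (hk₀ : 0 ≤ 1 + k) (hk : 1 + k ≤ 1 / 4)
    (hT : T ≤ (1 + k) / 4) :
    (a - s) ^ 2 / 4 ≤
      a ^ 2 / 2 + G / 2 + F + w * a + a * m + m ^ 2 / 2 -
        ((a ^ 2 / 2 - G / 2 - F) * k + (a + w + m) * s) := by
  have hI : (w - k * s) ^ 2 ≤ (1 + k) / 4 * (G - s ^ 2) :=
    hCS.trans (mul_le_mul_of_nonneg_right hT (sub_nonneg.2 hG))
  -- AM–GM: `0 ≤ 2 (I + q/4)²` with `I = w - k s`, `q = a - s`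
  have hIq : -((1 + k) * (G - s ^ 2) / 2 + (a - s) ^ 2 / 8) ≤ (w - k * s) * (a - s) := by
    nlinarith [sq_nonneg (w - k * s + (a - s) / 4)]
  have hid : a ^ 2 / 2 + G / 2 + F + w * a + a * m + m ^ 2 / 2 -
        ((a ^ 2 / 2 - G / 2 - F) * k + (a + w + m) * s) - (a - s) ^ 2 / 4 =
      (a - s) ^ 2 / 4 + (a - s + m) ^ 2 / 2 + (w - k * s) * (a - s) - (1 + k) * (a - s) ^ 2 / 2 +
        (1 + k) * ((G - s ^ 2) / 2 + F) := by
    ring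
  nlinarith [mul_le_mul_of_nonneg_right hk (sq_nonneg (a - s)), sq_nonneg (a - s + m),
    mul_nonneg hk₀ (add_nonneg (div_nonneg (sub_nonneg.2 hG) zero_le_two) hF)]

lemma inner_tangential_sq_le {n : E} (hn : ‖n‖ = 1) (v g : E) :
    (inner ℝ v g - inner ℝ n v * inner ℝ n g) ^ 2 ≤
      (‖v‖ ^ 2 - inner ℝ n v ^ 2) * (‖g‖ ^ 2 - inner ℝ n g ^ 2) := by
  have h := real_inner_mul_inner_self_le (v - inner ℝ n v • n) (g - inner ℝ n g • n)
  simp only [inner_sub_left, inner_sub_right, real_inner_smul_left, real_inner_smul_right,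
    real_inner_self_eq_norm_sq, norm_smul, Real.norm_eq_abs, mul_pow, sq_abs, hn,
    real_inner_comm n] at h
  convert h using 1 <;> ring

lemma sq_sub_inner_div_four_le_fluxDensity {n v : E} {F : ℝ} (hn : ‖n‖ = 1) (hF : 0 ≤ F)
    (hk₀ : 0 ≤ 1 + inner ℝ n v) (hk : 1 + inner ℝ n v ≤ 1 / 4)
    (hT : ‖v‖ ^ 2 - inner ℝ n v ^ 2 ≤ (1 + inner ℝ n v) / 4) (g : E) (a m : ℝ) :
    (a - inner ℝ n g) ^ 2 / 4 ≤ fluxDensity n v g a m F := by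
  have hG : inner ℝ n g ^ 2 ≤ ‖g‖ ^ 2 := by
    refine sq_le_sq.2 ((abs_real_inner_le_norm n g).trans ?_)
    rw [hn, one_mul, abs_norm]
  rw [fluxDensity, inner_add_right, real_inner_smul_right, real_inner_smul_right]
  exact flux_scalar_bound hF hG ((inner_tangential_sq_le hn v g).trans
    (mul_le_mul_of_nonneg_right le_rfl (sub_nonneg.2 hG))) hk₀ hk hT

lemma one_add_inner_radial_bounds {x₀ y : E} {t₀ : ℝ} (ht₀ : t₀ < 0) (hx₀ : ‖x₀‖ ≤ -t₀)
    (hy : -7 * t₀ ≤ ‖y‖) :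
    0 ≤ 1 + inner ℝ (‖y‖⁻¹ • y) ((t₀ - ‖y‖)⁻¹ • (x₀ + y)) ∧
      1 + inner ℝ (‖y‖⁻¹ • y) ((t₀ - ‖y‖)⁻¹ • (x₀ + y)) ≤ 1 / 4 ∧
      ‖(t₀ - ‖y‖)⁻¹ • (x₀ + y)‖ ^ 2 - inner ℝ (‖y‖⁻¹ • y) ((t₀ - ‖y‖)⁻¹ • (x₀ + y)) ^ 2 ≤
        (1 + inner ℝ (‖y‖⁻¹ • y) ((t₀ - ‖y‖)⁻¹ • (x₀ + y))) / 4 := by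
  have hy₀ : 0 < ‖y‖ := by linarith
  have hne : t₀ - ‖y‖ ≠ 0 := by linarith
  have hn : ‖‖y‖⁻¹ • y‖ = 1 := norm_smul_inv_norm (norm_pos_iff.1 hy₀)
  set p := inner ℝ (‖y‖⁻¹ • y) x₀ with hp_def
  have hp : |p| ≤ -t₀ := (abs_real_inner_le_norm _ _).trans (by rw [hn, one_mul]; exact hx₀)
  have hyy : inner ℝ (‖y‖⁻¹ • y) y = ‖y‖ := by
    rw [real_inner_smul_left, real_inner_self_eq_norm_sq]
    field_simp
  have hk : inner ℝ (‖y‖⁻¹ • y) ((t₀ - ‖y‖)⁻¹ • (x₀ + y)) = (p + ‖y‖) / (t₀ - ‖y‖) := by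
    rw [real_inner_smul_right, inner_add_right, hyy, inv_mul_eq_div]
  have hxy : inner ℝ x₀ y = ‖y‖ * p := by
    rw [hp_def, real_inner_smul_left, real_inner_comm]
    field_simp
  have hv : ‖(t₀ - ‖y‖)⁻¹ • (x₀ + y)‖ ^ 2 =
      (‖x₀‖ ^ 2 + 2 * (‖y‖ * p) + ‖y‖ ^ 2) / (t₀ - ‖y‖) ^ 2 := by
    rw [norm_smul, mul_pow, Real.norm_eq_abs, sq_abs, norm_add_sq_real, hxy]
    field_simp
  have hden : 0 < ‖y‖ - t₀ := by linarith
  have hd : 1 + (p + ‖y‖) / (t₀ - ‖y‖) = (-t₀ - p) / (‖y‖ - t₀) := by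
    field_simp
    ring
  have hT : (‖x₀‖ ^ 2 + 2 * (‖y‖ * p) + ‖y‖ ^ 2) / (t₀ - ‖y‖) ^ 2 - ((p + ‖y‖) / (t₀ - ‖y‖)) ^ 2
      = (‖x₀‖ ^ 2 - p ^ 2) / (‖y‖ - t₀) ^ 2 := by
    field_simp
    ring
  rw [hk, hv, hd, hT]
  obtain ⟨hp₁, hp₂⟩ := abs_le.1 hp
  refine ⟨div_nonneg (by linarith) hden.le, (div_le_iff₀ hden).2 (by linarith), ?_⟩
  have hx₀p : ‖x₀‖ ^ 2 - p ^ 2 ≤ (-t₀ - p) * (‖y‖ - t₀) / 4 := by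
    nlinarith [norm_nonneg x₀, mul_le_mul_of_nonneg_left (show 8 * -t₀ ≤ ‖y‖ - t₀ by linarith)
      (show 0 ≤ -t₀ - p by linarith)]
  calc (‖x₀‖ ^ 2 - p ^ 2) / (‖y‖ - t₀) ^ 2
      ≤ (-t₀ - p) * (‖y‖ - t₀) / 4 / (‖y‖ - t₀) ^ 2 := by gcongr
    _ = (-t₀ - p) / (‖y‖ - t₀) / 4 := by field_simp

end FluxDensity

lemma Afun_eq_fluxDensity (x₀ : E3) (u : E3 × ℝ → ℝ) (x : E3) (t : ℝ) :
    Afun x₀ u x t = fluxDensity (‖x - x₀‖⁻¹ • (x - x₀)) (t⁻¹ • x) (sgrad u x t) (ut u x t)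
      (u (x, t) / t) (|u (x, t)| ^ 6 / 6) := by
  simp only [Afun, Q0, P0, fluxDensity]
  ring

lemma half_mul_uρ_sq (x₀ : E3) (u : E3 × ℝ → ℝ) (x : E3) (t : ℝ) :
    1 / 2 * uρ x₀ u x t ^ 2 =
      (ut u x t - inner ℝ (‖x - x₀‖⁻¹ • (x - x₀)) (sgrad u x t)) ^ 2 / 4 := by
  rw [uρ, uσ, div_pow, Real.sq_sqrt zero_le_two]
  ring

lemma half_mul_uρ_sq_le_Afun (u : E3 × ℝ → ℝ) {x₀ y : E3} {t₀ : ℝ} (ht₀ : t₀ < 0)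
    (hx₀ : ‖x₀‖ ≤ -t₀) (hy : -7 * t₀ ≤ ‖y‖) :
    1 / 2 * uρ x₀ u (x₀ + y) (t₀ - ‖y‖) ^ 2 ≤ Afun x₀ u (x₀ + y) (t₀ - ‖y‖) := by
  obtain ⟨hk₀, hk, hT⟩ := one_add_inner_radial_bounds ht₀ hx₀ hy
  have hn : ‖‖y‖⁻¹ • y‖ = 1 := norm_smul_inv_norm (norm_pos_iff.1 (by linarith))
  rw [half_mul_uρ_sq, Afun_eq_fluxDensity, add_sub_cancel_left]
  exact sq_sub_inner_div_four_le_fluxDensity hn (by positivity) hk₀ hk hT _ _ _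

lemma slab_eq_prod (t₁ : ℝ) : slab t₁ = (univ : Set E3) ×ˢ Ico t₁ 0 := by
  ext p
  simp [slab]

lemma slab_mem_nhds {t₁ t : ℝ} (x : E3) (h₁ : t₁ < t) (h₀ : t < 0) : slab t₁ ∈ nhds (x, t) := by
  rw [slab_eq_prod]
  exact prod_mem_nhds univ_mem (Ico_mem_nhds h₁ h₀)

lemma ut_eq_fderiv {u : E3 × ℝ → ℝ} {x : E3} {t : ℝ} (h : DifferentiableAt ℝ u (x, t)) :
    ut u x t = fderiv ℝ u (x, t) (0, 1) := by
  have := h.hasFDerivAt.comp_hasDerivAt t (hasFDerivAt_prodMk_right (𝕜 := ℝ) x t).hasDerivAt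
  exact this.deriv

lemma sgrad_eq_fderiv {u : E3 × ℝ → ℝ} {x : E3} {t : ℝ} (h : DifferentiableAt ℝ u (x, t)) :
    sgrad u x t =
      (InnerProductSpace.toDual ℝ E3).symm ((fderiv ℝ u (x, t)).comp (.inl ℝ E3 ℝ)) := by
  have := h.hasFDerivAt.comp x (hasFDerivAt_prodMk_left (𝕜 := ℝ) x t)
  refine HasGradientAt.gradient ?_
  rw [hasGradientAt_iff_hasFDerivAt, LinearIsometryEquiv.apply_symm_apply]
  exact this

lemma integrableOn_Afun_mantle {t₁ : ℝ} {u : E3 × ℝ → ℝ} (hu : ContDiffOn ℝ 1 u (slab t₁))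
    (x₀ : E3) {t₀ τ σ : ℝ} (hτ : t₁ ≤ τ) (hσ₀ : σ < 0) (hσ : σ < t₀) :
    IntegrableOn (fun y : E3 => Afun x₀ u (x₀ + y) (t₀ - ‖y‖))
      {y : E3 | t₀ - σ ≤ ‖y‖ ∧ ‖y‖ ≤ t₀ - τ} := by
  set K := {y : E3 | t₀ - σ ≤ ‖y‖ ∧ ‖y‖ ≤ t₀ - τ}
  have hK : IsCompact K :=
    (isCompact_closedBall (0 : E3) (t₀ - τ)).of_isClosed_subset
      ((isClosed_le continuous_const continuous_norm).inter
        (isClosed_le continuous_norm continuous_const))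
      fun y hy => mem_closedBall_zero_iff.2 hy.2
  set z : E3 → E3 × ℝ := fun y => (x₀ + y, t₀ - ‖y‖)
  have hz : MapsTo z K (slab t₁) := fun y hy => ⟨by linarith [hy.2], by linarith [hy.1]⟩
  set D := fderivWithin ℝ u (slab t₁)
  have hDz : ContinuousOn (fun y => D (z y)) K :=
    (hu.continuousOn_fderivWithin (slab_eq_prod t₁ ▸ uniqueDiffOn_univ.prod
      (uniqueDiffOn_Ico t₁ 0)) le_rfl).comp (by fun_prop) hz
  have huz : ContinuousOn (fun y => u (z y)) K := hu.continuousOn.comp (by fun_prop) hz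
  have hy₀ : ∀ y ∈ K, ‖y‖ ≠ 0 := fun y hy => by linarith [hy.1]
  have ht : ∀ y ∈ K, t₀ - ‖y‖ ≠ 0 := fun y hy => by linarith [hy.1]
  -- `Afun` in terms of the one-sided derivative, which is continuous up to the bottom `t = t₁`
  set G : E3 → ℝ := fun y => fluxDensity (‖y‖⁻¹ • y) ((t₀ - ‖y‖)⁻¹ • (x₀ + y))
    ((InnerProductSpace.toDual ℝ E3).symm ((D (z y)).comp (.inl ℝ E3 ℝ))) (D (z y) (0, 1))
    (u (z y) / (t₀ - ‖y‖)) (|u (z y)| ^ 6 / 6)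
  have hG : ContinuousOn G K := by
    have hdual : Continuous fun L : (E3 × ℝ) →L[ℝ] ℝ =>
        (InnerProductSpace.toDual ℝ E3).symm (L.comp (.inl ℝ E3 ℝ)) := by
      fun_prop
    exact .fluxDensity (by fun_prop (disch := assumption)) (by fun_prop (disch := assumption))
      (hdual.comp_continuousOn hDz) (hDz.clm_apply continuousOn_const)
      (huz.div (by fun_prop) ht) ((huz.abs.pow 6).div_const 6)
  refine (hG.integrableOn_compact hK).congr_fun_ae ?_
  have hsphere : ∀ᵐ y : E3, y ∉ Metric.sphere 0 (t₀ - t₁) :=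
    measure_eq_zero_iff_ae_notMem.1 (Measure.addHaar_sphere volume 0 _)
  rw [EventuallyEq, ae_restrict_iff' hK.isClosed.measurableSet]
  filter_upwards [hsphere] with y hyt hy
  rw [mem_sphere_zero_iff_norm] at hyt
  have hs := slab_mem_nhds (x₀ + y) (t₁ := t₁) (t := t₀ - ‖y‖)
    (by linarith [lt_of_le_of_ne (hy.2.trans (by linarith)) hyt]) (by linarith [hy.1])
  have hdiff := (hu.differentiableOn one_ne_zero).differentiableAt hs
  rw [Afun_eq_fluxDensity, ut_eq_fderiv hdiff, sgrad_eq_fderiv hdiff, add_sub_cancel_left]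
  simp only [G, D, z, fderivWithin_of_mem_nhds hs]

lemma measurableSet_closedAnnulus (a b : ℝ) : MeasurableSet {y : E3 | a ≤ ‖y‖ ∧ ‖y‖ ≤ b} :=
  (measurableSet_le measurable_const measurable_norm).inter
    (measurableSet_le measurable_norm measurable_const)

lemma mInt_const_mul (x₀ : E3) (t₀ T S c : ℝ) (f : E3 → ℝ → ℝ) :
    mInt x₀ t₀ T S (fun x t => c * f x t) = c * mInt x₀ t₀ T S f := by
  rw [mInt, mInt, integral_const_mul, mul_left_comm]

lemma mInt_mono_of_nonneg {x₀ : E3} {t₀ T S : ℝ} {f g : E3 → ℝ → ℝ}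
    (hf : ∀ y : E3, 0 ≤ f (x₀ + y) (t₀ - ‖y‖))
    (hg : IntegrableOn (fun y : E3 => g (x₀ + y) (t₀ - ‖y‖))
      {y : E3 | t₀ - S ≤ ‖y‖ ∧ ‖y‖ ≤ t₀ - T})
    (hfg : ∀ y : E3, t₀ - S ≤ ‖y‖ → ‖y‖ ≤ t₀ - T →
      f (x₀ + y) (t₀ - ‖y‖) ≤ g (x₀ + y) (t₀ - ‖y‖)) :
    mInt x₀ t₀ T S f ≤ mInt x₀ t₀ T S g := by
  refine mul_le_mul_of_nonneg_left ?_ (Real.sqrt_nonneg 2)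
  refine integral_mono_of_nonneg (.of_forall hf) hg ?_
  exact (ae_restrict_iff' (measurableSet_closedAnnulus _ _)).2
    (.of_forall fun y hy => hfg y hy.1 hy.2)

theorem statement13_general (t₁ : ℝ) (u : E3 × ℝ → ℝ)
    (hu : ContDiffOn ℝ 2 u (slab t₁)) :
    ∀ ε : ℝ, 0 < ε →
      ∃ C : ℝ, 1 ≤ C ∧
        ∀ (x₀ : E3) (t₀ : ℝ), t₁ ≤ t₀ → t₀ < 0 → ‖x₀‖ ≤ |t₀| →
          ∀ τ σ : ℝ, t₁ ≤ τ → τ ≤ σ → σ ≤ C * t₀ →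
            mInt x₀ t₀ τ σ (Afun x₀ u) ≥
              (1 / 2) * mInt x₀ t₀ τ σ (fun x t => (uρ x₀ u x t) ^ 2) -
                ε * ∫ x in Dsec t₁, eDen u x t₁ := by
  intro ε hε
  refine ⟨8, by norm_num, fun x₀ t₀ _ ht₀ hx₀ τ σ hτ _ hσ => ?_⟩
  rw [abs_of_neg ht₀] at hx₀
  have hE₀ : 0 ≤ ∫ x in Dsec t₁, eDen u x t₁ := integral_nonneg fun x => by
    unfold eDen
    positivity
  calc 1 / 2 * mInt x₀ t₀ τ σ (fun x t => uρ x₀ u x t ^ 2) - ε * ∫ x in Dsec t₁, eDen u x t₁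
      ≤ mInt x₀ t₀ τ σ (fun x t => 1 / 2 * uρ x₀ u x t ^ 2) := by
        rw [mInt_const_mul]
        exact sub_le_self _ (mul_nonneg hε.le hE₀)
    _ ≤ mInt x₀ t₀ τ σ (Afun x₀ u) :=
        mInt_mono_of_nonneg (fun _ => by positivity)
          (integrableOn_Afun_mantle (hu.of_le (by norm_num)) x₀ hτ (by linarith) (by linarith))
          fun y hy _ => half_mul_uρ_sq_le_Afun u ht₀ hx₀ (by linarith)

/-- Lemma 4.5: for every `ε > 0` there is `C = C(ε) ≥ 1` such that for all
vertices `z₀ = (x₀,t₀)` in the backward cone and all `t₁ ≤ τ ≤ σ ≤ C·t₀`,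
`∫_{M_τ^σ(z₀)} A do ≥ ½ ∫_{M_τ^σ(z₀)} |u_ρ|² do − ε E₀`. -/
theorem statement13 (t₁ : ℝ) (ht₁ : t₁ < 0) (u : E3 × ℝ → ℝ)
    (hu : ContDiffOn ℝ 2 u (slab t₁))
    (heq : ∀ p ∈ slab t₁, utt u p.1 p.2 - slap u p.1 p.2 + (u p) ^ 5 = 0)
    (hE : IntegrableOn (fun x => eDen u x t₁) (Dsec t₁)) :
    ∀ ε : ℝ, 0 < ε →
      ∃ C : ℝ, 1 ≤ C ∧
        ∀ (x₀ : E3) (t₀ : ℝ), t₁ ≤ t₀ → t₀ < 0 → ‖x₀‖ ≤ |t₀| →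
          ∀ τ σ : ℝ, t₁ ≤ τ → τ ≤ σ → σ ≤ C * t₀ →
            mInt x₀ t₀ τ σ (Afun x₀ u) ≥
              (1 / 2) * mInt x₀ t₀ τ σ (fun x t => (uρ x₀ u x t) ^ 2) -
                ε * ∫ x in Dsec t₁, eDen u x t₁ :=
  statement13_general t₁ u hu
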